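/- arXiv:1207.3781 — 3 statements merged into one kernel-verified Lean document; each statement's English description precedes it below -/
import Mathlib

section
/- Let R be a semiprime left noetherian ring and L an essential left ideal of R. Then every ring endomorphism σ of R with σ(L) = L is an automorphism of R. -/
universe u v

/-- The left annihilator of the set `L` in `S` is zero. -/
def LAnnZero (S : Type u) [Ring S] (L : Set S) : Prop :=
  ∀ a : S, (∀ x ∈ L, a * x = 0) → a = 0

/-- The right annihilator of the set `L` in `S` is zero. -/
def RAnnZero (S : Type u) [Ring S] (L : Set S) : Prop :=
  ∀ a : S, (∀ x ∈ L, x * a = 0) → a = 0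

/-- A left ideal is essential: it meets every nonzero left ideal nontrivially. -/
def IsEssentialLeftIdeal {S : Type u} [Ring S] (L : Ideal S) : Prop :=
  ∀ I : Ideal S, I ≠ ⊥ → L ⊓ I ≠ ⊥

/-- A (possibly noncommutative) ring is semiprime: `aRa = 0` implies `a = 0`. -/
def IsSemiprimeRing (S : Type u) [Ring S] : Prop :=
  ∀ a : S, (∀ r : S, a * r * a = 0) → a = 0

/-- A (possibly noncommutative) ring is prime: it is nonzero and `aRb = 0`
implies `a = 0` or `b = 0`. -/
def IsPrimeRingE (S : Type u) [Ring S] : Prop :=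
  Nontrivial S ∧ ∀ a b : S, (∀ r : S, a * r * b = 0) → a = 0 ∨ b = 0

/-- `a` is left regular: its left annihilator is zero. -/
def LeftReg {S : Type u} [Ring S] (a : S) : Prop := ∀ x : S, x * a = 0 → x = 0

/-- `a` is right regular: its right annihilator is zero. -/
def RightReg {S : Type u} [Ring S] (a : S) : Prop := ∀ x : S, a * x = 0 → x = 0

/-- `a` is regular: neither a left nor a right zero divisor. -/
def Reg {S : Type u} [Ring S] (a : S) : Prop := LeftReg a ∧ RightReg a

/-- A self-map of a ring has large image: its range contains an essential
left ideal with zero right annihilator. -/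
def HasLargeImage {S : Type u} [Ring S] (f : S → S) : Prop :=
  ∃ L : Ideal S, IsEssentialLeftIdeal L ∧ RAnnZero S (L : Set S) ∧ (L : Set S) ⊆ Set.range f

/-- The left annihilator of a set, as a left ideal. -/
def lAnnIdeal (S : Type u) [Ring S] (X : Set S) : Ideal S where
  carrier := {a | ∀ x ∈ X, a * x = 0}
  add_mem' := by intro a b ha hb x hx; rw [add_mul, ha x hx, hb x hx, add_zero]
  zero_mem' := by intro x hx; rw [zero_mul]
  smul_mem' := by intro r a ha x hx; simp only [smul_eq_mul, mul_assoc, ha x hx, mul_zero]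

/-- ACC on left annihilator ideals. -/
def AccLeftAnn (S : Type u) [Ring S] : Prop :=
  ∀ X : ℕ → Set S, (∀ n, lAnnIdeal S (X n) ≤ lAnnIdeal S (X (n + 1))) →
    ∃ N, ∀ m, N ≤ m → lAnnIdeal S (X m) = lAnnIdeal S (X N)

/-- Finite uniform (Goldie) dimension on the left: no infinite independent
family of nonzero left ideals. -/
def FinUdim (S : Type u) [Ring S] : Prop :=
  ¬ ∃ f : ℕ → Ideal S, (∀ n, f n ≠ ⊥) ∧ iSupIndep f

/-- Left Goldie ring: ACC on left annihilators and finite left uniform dimension. -/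
def IsLeftGoldie (S : Type u) [Ring S] : Prop := AccLeftAnn S ∧ FinUdim S

/-- The left uniform (Goldie) dimension of `S` is at least `n`. -/
def UdimGE (S : Type u) [Ring S] (n : ℕ) : Prop :=
  ∃ f : Fin n → Ideal S, (∀ i, f i ≠ ⊥) ∧ iSupIndep f

/-- `ι : R →+* Q` realizes `Q` as a classical left quotient ring of `R`:
`ι` is injective, regular elements become units, and every element of `Q`
is a left fraction `(ι s)⁻¹ * (ι a)` with `s` regular. -/
structure IsLeftQuotRing {R : Type u} {Q : Type v} [Ring R] [Ring Q] (ι : R →+* Q) : Prop where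
  inj : Function.Injective ι
  unit : ∀ a : R, Reg a → IsUnit (ι a)
  frac : ∀ q : Q, ∃ a s : R, Reg s ∧ ι s * q = ι a

/-- An ideal (a priori only a left ideal) is two-sided. -/
def IsTwoSided {S : Type u} [Ring S] (I : Ideal S) : Prop := ∀ x ∈ I, ∀ r : S, x * r ∈ I

/-- ACC on two-sided ideals. -/
def AccTwoSided (S : Type u) [Ring S] : Prop :=
  ∀ f : ℕ → Ideal S, (∀ n, IsTwoSided (f n)) → (∀ n, f n ≤ f (n + 1)) →
    ∃ N, ∀ m, N ≤ m → f m = f N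

/-- A trivially ordered set: no strict comparabilities. -/
def TrivOrd (P : Type u) [Preorder P] : Prop := ∀ x y : P, ¬ x < y

/-- `DevLE α P` : the deviation (in the sense of Gabriel–Rentschler) of the
poset `P` is at most `α` (where trivially ordered intervals count as having
deviation `-∞`). -/
def DevLE (α : Ordinal.{v}) (P : Type u) [Preorder P] : Prop :=
  ∀ f : ℕ → P, (∀ n, f (n + 1) ≤ f n) →
    ∃ N : ℕ, ∀ n, N ≤ n →
      TrivOrd ↥(Set.Icc (f (n + 1)) (f n)) ∨
      ∃ β, ∃ _ : β < α, DevLE β ↥(Set.Icc (f (n + 1)) (f n))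
termination_by α

/-- `R` has left Krull dimension in the sense of Gabriel–Rentschler: the
poset of left ideals of `R` has deviation. -/
def HasLeftKrullDim (R : Type u) [Ring R] : Prop :=
  ∃ α : Ordinal.{u}, DevLE α (Ideal R)

/-- `(A, ι, τ)` is a Cohn–Jordan extension of `(R, σ)`: `ι : R → A` is an
injective embedding, the automorphism `τ` of `A` extends `σ`, and every
element of `A` is mapped into `R` by some positive power of `τ`. -/
structure IsCohnJordan {R A : Type u} [Ring R] [Ring A] (σ : R →+* R) (ι : R →+* A)
    (τ : A ≃+* A) : Prop where
  inj : Function.Injective ι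
  comm : ∀ r : R, τ (ι r) = ι (σ r)
  small : ∀ a : A, ∃ n : ℕ, 1 ≤ n ∧ (⇑τ)^[n] a ∈ Set.range ι

namespace CJ
variable {R : Type u} [Ring R]
def lann (a : R) : Ideal R where
  carrier := {x | x * a = 0}
  add_mem' := by
    intro x y hx hy; simp only [Set.mem_setOf_eq] at *; rw [add_mul, hx, hy, add_zero]
  zero_mem' := by simp
  smul_mem' := by
    intro r x hx; simp only [smul_eq_mul, Set.mem_setOf_eq] at *; rw [mul_assoc, hx, mul_zero]
theorem mem_lann {a x : R} : x ∈ lann a ↔ x * a = 0 := Iff.rfl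
theorem ess_mono {E F : Ideal R} (h : IsEssentialLeftIdeal E) (hle : E ≤ F) :
    IsEssentialLeftIdeal F := by
  intro I hI hF
  exact h I hI (le_bot_iff.mp (hF ▸ inf_le_inf_right I hle))
theorem ess_inf_bot {E I : Ideal R} (h : IsEssentialLeftIdeal E) (hEI : E ⊓ I = ⊥) : I = ⊥ := by
  by_contra hI; exact h I hI hEI
theorem chain_stab [IsNoetherianRing R] (f : ℕ → Ideal R) (hf : Monotone f) :
    ∃ n, ∀ m, n ≤ m → f n = f m :=
  monotone_stabilizes_iff_noetherian.mpr (inferInstanceAs (IsNoetherian R R)) ⟨f, hf⟩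
theorem ideal_set_max [IsNoetherianRing R] (S : Set (Ideal R)) (hS : S.Nonempty) :
    ∃ I ∈ S, ∀ J ∈ S, I ≤ J → J = I := by
  obtain ⟨I, hI, hmax⟩ :=
    set_has_maximal_iff_noetherian.mpr (inferInstanceAs (IsNoetherian R R)) S hS
  exact ⟨I, hI, fun J hJ hIJ => hIJ.lt_or_eq.elim (fun h => absurd h (hmax J hJ)) (fun h => h.symm)⟩
theorem mul_pow_succ (x y : R) (m : ℕ) : (x * y) ^ (m + 1) = x * ((y * x) ^ m * y) := by
  induction m with
  | zero => simp
  | succ m ih => rw [pow_succ, ih, pow_succ]; simp only [mul_assoc]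

-- ### new part

/-- Utumi-type lemma: in a semiprime ring with ACC on left ideals, if `a*r` is
nilpotent for all `r`, then `a = 0`. -/
theorem nil_elt_zero (hsp : IsSemiprimeRing R) [IsNoetherianRing R]
    (a : R) (hnil : ∀ r : R, IsNilpotent (a * r)) : a = 0 := by
  classical
  by_contra ha
  set S : Set (Ideal R) := {J | ∃ b : R, b ≠ 0 ∧ (∃ r, a * r = b) ∧ J = lann b} with hSdef
  have hne : S.Nonempty := ⟨lann a, a, ha, ⟨1, mul_one a⟩, rfl⟩
  obtain ⟨J, ⟨b, hb0, ⟨r0, hr0⟩, rfl⟩, hmax⟩ := ideal_set_max S hne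
  apply hb0
  apply hsp
  intro r
  by_cases hbr : b * r = 0
  · rw [hbr, zero_mul]
  · have hbrnil : IsNilpotent (b * r) := by
      rw [← hr0, mul_assoc]; exact hnil _
    set k := Nat.find hbrnil with hkdef
    have hk : (b * r) ^ k = 0 := Nat.find_spec hbrnil
    have hk0 : k ≠ 0 := by
      intro h
      rw [h, pow_zero] at hk
      exact hbr (by rw [← mul_one (b*r), hk, mul_zero])
    have hk1 : k ≠ 1 := by
      intro h
      rw [h, pow_one] at hk
      exact hbr hk
    obtain ⟨k2, hk2⟩ : ∃ k2, k = k2 + 2 := ⟨k - 2, by omega⟩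
    set w := (b * r) ^ (k - 1) with hwdef
    have hw0 : w ≠ 0 := Nat.find_min hbrnil (by omega)
    have hwb : w = b * ((r * b) ^ k2 * r) := by
      rw [hwdef, show k - 1 = k2 + 1 by omega, mul_pow_succ]
    have hwS : lann w ∈ S := by
      refine ⟨w, hw0, ⟨r0 * ((r * b) ^ k2 * r), ?_⟩, rfl⟩
      rw [← mul_assoc, hr0, ← hwb]
    have hle : lann b ≤ lann w := by
      intro z hz
      rw [mem_lann] at *
      rw [hwb, ← mul_assoc, hz, zero_mul]
    have heq : lann w = lann b := hmax _ hwS hle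
    have hbrw : (b * r) * w = 0 := by
      rw [hwdef, ← pow_succ']
      rw [show k - 1 + 1 = k by omega]
      exact hk
    have : b * r ∈ lann b := heq ▸ (mem_lann.mpr hbrw)
    exact mem_lann.mp this

/-- an element with essential left annihilator is nilpotent -/
theorem ess_lann_nilpotent [IsNoetherianRing R] (y : R)
    (h : IsEssentialLeftIdeal (lann y)) : IsNilpotent y := by
  obtain ⟨n0, hn0⟩ := chain_stab (fun k => lann (y ^ (k + 1)))
    (monotone_nat_of_le_succ (by
      intro k x hx
      rw [mem_lann] at *
      rw [pow_succ, ← mul_assoc, hx, zero_mul]))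
  refine ⟨n0 + 1, ?_⟩
  have hess' : IsEssentialLeftIdeal (lann (y ^ (n0 + 1))) := by
    apply ess_mono h
    intro x hx
    rw [mem_lann] at *
    rw [pow_succ', ← mul_assoc, hx, zero_mul]
  have hinf : lann (y ^ (n0 + 1)) ⊓ Ideal.span {y ^ (n0 + 1)} = ⊥ := by
    apply (Submodule.eq_bot_iff _).mpr
    rintro z ⟨hz1, hz2⟩
    obtain ⟨s, hs⟩ := Submodule.mem_span_singleton.mp hz2
    rw [smul_eq_mul] at hs
    have hz1' : z * y ^ (n0 + 1) = 0 := hz1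
    rw [← hs, mul_assoc, ← pow_add] at hz1'
    have := hn0 (n0 + 1 + n0) (by omega)
    have hz3 : s ∈ lann (y ^ (n0 + 1 + n0 + 1)) := mem_lann.mpr (by
      rw [show n0 + 1 + n0 + 1 = n0 + 1 + (n0 + 1) by omega]; exact hz1')
    rw [← this] at hz3
    rw [← hs, mem_lann.mp hz3]
  have hspan : Ideal.span {y ^ (n0 + 1)} = (⊥ : Ideal R) := ess_inf_bot hess' hinf
  have := Ideal.subset_span (Set.mem_singleton (y ^ (n0 + 1)))
  rw [hspan] at this
  exact (Submodule.mem_bot R).mp this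

/-- an element with essential left annihilator is zero (semiprime case):
the left singular ideal vanishes -/
theorem ess_lann_zero (hsp : IsSemiprimeRing R) [IsNoetherianRing R] (y : R)
    (h : IsEssentialLeftIdeal (lann y)) : y = 0 := by
  apply nil_elt_zero hsp
  intro r
  apply ess_lann_nilpotent
  apply ess_mono h
  intro x hx
  rw [mem_lann] at *
  rw [← mul_assoc, hx, zero_mul]

def condI (L : Ideal R) (r : R) : Ideal R where
  carrier := {x | x * r ∈ L}
  add_mem' := by
    intro x y hx hy
    simp only [Set.mem_setOf_eq] at *
    rw [add_mul]; exact L.add_mem hx hy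
  zero_mem' := by
    simp only [Set.mem_setOf_eq, zero_mul]; exact L.zero_mem
  smul_mem' := by
    intro c x hx
    simp only [smul_eq_mul, Set.mem_setOf_eq] at *
    rw [mul_assoc]
    exact L.smul_mem c hx

theorem mem_condI {L : Ideal R} {r x : R} : x ∈ condI L r ↔ x * r ∈ L := Iff.rfl

/-- right multiplication as a left-module map -/
def rmul (r : R) : R →ₗ[R] R where
  toFun := fun x => x * r
  map_add' := fun a b => add_mul a b r
  map_smul' := fun c x => by simp only [smul_eq_mul, RingHom.id_apply, mul_assoc]

theorem cond_essential {L : Ideal R} (hess : IsEssentialLeftIdeal L) (r : R) :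
    IsEssentialLeftIdeal (condI L r) := by
  intro I hI hbot
  by_cases hall : ∀ x ∈ I, x * r = 0
  · have hIle : I ≤ condI L r := by
      intro x hx
      rw [mem_condI, hall x hx]
      exact L.zero_mem
    rw [inf_eq_right.mpr hIle] at hbot
    exact hI hbot
  · push_neg at hall
    obtain ⟨x0, hx0I, hx0⟩ := hall
    set J : Ideal R := Submodule.map (rmul r) I with hJdef
    have hJ : J ≠ ⊥ := by
      rw [Submodule.ne_bot_iff]
      exact ⟨x0 * r, ⟨x0, hx0I, rfl⟩, hx0⟩
    obtain ⟨z, hz, hz0⟩ := (Submodule.ne_bot_iff _).mp (hess J hJ)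
    obtain ⟨hzL, x, hxI, hxz⟩ := hz
    have hxin : x ∈ condI L r ⊓ I := by
      refine ⟨?_, hxI⟩
      show x * r ∈ L
      have he : (rmul r) x = x * r := rfl
      rw [← he, hxz]
      exact hzL
    rw [hbot] at hxin
    apply hz0
    rw [← hxz]
    show x * r = 0
    rw [(Submodule.mem_bot R).mp hxin, zero_mul]

/-- in a nonzero left ideal there is a nonzero element whose left annihilator
meets `R·a` trivially -/
theorem exists_good_elt (hsp : IsSemiprimeRing R) [IsNoetherianRing R]
    (I : Ideal R) (hI : I ≠ ⊥) :
    ∃ a ∈ I, a ≠ 0 ∧ ∀ x : R, x * a = 0 → (∃ s : R, x = s * a) → x = 0 := by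
  have hnonnil : ∃ b ∈ I, ¬ IsNilpotent b := by
    by_contra h
    push_neg at h
    apply hI
    rw [Submodule.eq_bot_iff]
    intro b hb
    apply nil_elt_zero hsp
    intro r
    obtain ⟨m, hm⟩ := h (r * b) (by simpa [smul_eq_mul] using I.smul_mem r hb)
    exact ⟨m + 1, by rw [mul_pow_succ, hm, zero_mul, mul_zero]⟩
  obtain ⟨b, hbI, hbnn⟩ := hnonnil
  obtain ⟨n0, hn0⟩ := chain_stab (fun k => lann (b ^ (k + 1)))
    (monotone_nat_of_le_succ (by
      intro k x hx
      rw [mem_lann] at *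
      rw [pow_succ, ← mul_assoc, hx, zero_mul]))
  refine ⟨b ^ (n0 + 1), ?_, fun h => hbnn ⟨n0 + 1, h⟩, ?_⟩
  · rw [pow_succ]
    simpa [smul_eq_mul] using I.smul_mem (b ^ n0) hbI
  · rintro x hx ⟨s, rfl⟩
    have h1 : s * b ^ (n0 + 1 + n0 + 1) = 0 := by
      rw [show n0 + 1 + n0 + 1 = n0 + 1 + (n0 + 1) by omega, pow_add, ← mul_assoc]
      exact hx
    have h2 := hn0 (n0 + 1 + n0) (by omega)
    have h3 : s ∈ lann (b ^ (n0 + 1 + n0 + 1)) := mem_lann.mpr h1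
    rw [← h2] at h3
    rw [mem_lann.mp h3]

/-- a good tuple in `L`: nonzero elements whose left annihilators meet their
cyclic modules trivially, with triangular vanishing products -/
def GoodT (L : Ideal R) (n : ℕ) (a : Fin n → R) : Prop :=
  (∀ i, a i ∈ L) ∧ (∀ i, a i ≠ 0) ∧
  (∀ (i : Fin n) (x : R), x * a i = 0 → (∃ s : R, x = s * a i) → x = 0) ∧
  (∀ i j : Fin n, i < j → a j * a i = 0)

theorem goodT_indep {L : Ideal R} :
    ∀ {n : ℕ} {a : Fin n → R}, GoodT L n a →
      ∀ r : Fin n → R, (∑ i, r i * a i) = 0 → ∀ i, r i * a i = 0 := by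
  intro n
  induction n with
  | zero => intro a _ r _ i; exact i.elim0
  | succ n IH =>
    intro a hg r hr i
    obtain ⟨h1, h2, h3, h4⟩ := hg
    have h0 : r 0 * a 0 = 0 := by
      have e1 : (∑ j, r j * a j) * a 0 = 0 := by rw [hr, zero_mul]
      rw [Finset.sum_mul] at e1
      have e2 : ∀ j : Fin (n + 1), j ∈ Finset.univ → j ≠ 0 → (r j * a j) * a 0 = 0 := by
        intro j _ hj
        rw [mul_assoc, h4 0 j (Fin.pos_of_ne_zero hj), mul_zero]
      rw [Finset.sum_eq_single 0 e2 (fun h => absurd (Finset.mem_univ 0) h)] at e1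
      exact h3 0 (r 0 * a 0) (by rw [mul_assoc] at e1 ⊢; exact e1) ⟨r 0, rfl⟩
    have htail : (∑ j : Fin n, r j.succ * a j.succ) = 0 := by
      rw [Fin.sum_univ_succ, h0, zero_add] at hr
      exact hr
    have hg' : GoodT L n (fun j => a j.succ) :=
      ⟨fun j => h1 _, fun j => h2 _, fun j x hx hex => h3 _ x hx hex,
        fun i j hij => h4 _ _ (Fin.succ_lt_succ_iff.mpr hij)⟩
    have hIH := IH hg' (fun j => r j.succ) htail
    rcases Fin.eq_zero_or_eq_succ i with h | ⟨j, rfl⟩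
    · rw [h]; exact h0
    · exact hIH j

/-- every essential left ideal of a semiprime left noetherian ring contains a
left-regular element -/
theorem exists_leftreg (hsp : IsSemiprimeRing R) [IsNoetherianRing R]
    (L : Ideal R) (hess : IsEssentialLeftIdeal L) :
    ∃ c ∈ L, ∀ x : R, x * c = 0 → x = 0 := by
  classical
  set S : Set (Ideal R) :=
    {I | ∃ (n : ℕ) (a : Fin n → R), GoodT L n a ∧ I = Ideal.span (Set.range a)} with hSdef
  have hne : S.Nonempty := by
    refine ⟨⊥, 0, Fin.elim0, ⟨fun i => i.elim0, fun i => i.elim0,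
      fun i => i.elim0, fun i j _ => i.elim0⟩, ?_⟩
    rw [Set.range_eq_empty, Ideal.span_empty]
  obtain ⟨I0, ⟨n, a, hg, hI0⟩, hmax⟩ := ideal_set_max S hne
  have hKbot : L ⊓ (⨅ i, lann (a i)) = ⊥ := by
    by_contra hKne
    obtain ⟨a', ha'K, ha'0, ha'ann⟩ := exists_good_elt hsp _ hKne
    have ha'L : a' ∈ L := ha'K.1
    have ha'ml : ∀ i, a' * a i = 0 := fun i =>
      mem_lann.mp ((Submodule.mem_iInf _).mp ha'K.2 i)
    set a2 : Fin (n + 1) → R := Fin.snoc a a' with ha2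
    have ha2c : ∀ j : Fin n, a2 j.castSucc = a j := fun j => by simp [ha2]
    have ha2l : a2 (Fin.last n) = a' := by simp [ha2]
    have hcase : ∀ i : Fin (n + 1), (∃ j : Fin n, i = j.castSucc) ∨ i = Fin.last n := by
      intro i
      rcases lt_or_eq_of_le (Fin.le_last i) with h | h
      · exact Or.inl ⟨⟨i, h⟩, by ext; simp⟩
      · exact Or.inr h
    have hg2 : GoodT L (n + 1) a2 := by
      refine ⟨?_, ?_, ?_, ?_⟩
      · intro i
        rcases hcase i with ⟨j, rfl⟩ | rfl
        · rw [ha2c]; exact hg.1 j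
        · rw [ha2l]; exact ha'L
      · intro i
        rcases hcase i with ⟨j, rfl⟩ | rfl
        · rw [ha2c]; exact hg.2.1 j
        · rw [ha2l]; exact ha'0
      · intro i x hx hex
        rcases hcase i with ⟨j, rfl⟩ | rfl
        · rw [ha2c] at hx hex; exact hg.2.2.1 j x hx hex
        · rw [ha2l] at hx hex; exact ha'ann x hx hex
      · intro i j hij
        rcases hcase j with ⟨j', rfl⟩ | rfl
        · rcases hcase i with ⟨i', rfl⟩ | rfl
          · rw [ha2c, ha2c]
            exact hg.2.2.2 i' j' (by exact_mod_cast hij)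
          · exact absurd hij (lt_asymm (Fin.castSucc_lt_last j'))
        · rw [ha2l]
          rcases hcase i with ⟨i', rfl⟩ | rfl
          · rw [ha2c]; exact ha'ml i'
          · exact absurd hij (lt_irrefl _)
    have hsub : I0 ≤ Ideal.span (Set.range a2) := by
      rw [hI0]
      apply Ideal.span_mono
      rintro _ ⟨i, rfl⟩
      exact ⟨i.castSucc, ha2c i⟩
    have heq : Ideal.span (Set.range a2) = I0 :=
      hmax _ ⟨n + 1, a2, hg2, rfl⟩ hsub
    have ha'mem : a' ∈ Ideal.span (Set.range a) := by
      rw [← hI0, ← heq]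
      exact Ideal.subset_span ⟨Fin.last n, ha2l⟩
    obtain ⟨r, hra⟩ := (Submodule.mem_span_range_iff_exists_fun R).mp ha'mem
    have hrel : (∑ i : Fin (n + 1), (Fin.snoc r (-1) : Fin (n + 1) → R) i * a2 i) = 0 := by
      rw [Fin.sum_univ_castSucc]
      simp only [Fin.snoc_castSucc, Fin.snoc_last, ha2]
      rw [neg_one_mul]
      have hsum : (∑ i : Fin n, r i * a i) = a' := by
        simpa [smul_eq_mul] using hra
      rw [hsum, add_neg_cancel]
    have hlast := goodT_indep hg2 _ hrel (Fin.last n)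
    rw [Fin.snoc_last, ha2l, neg_one_mul, neg_eq_zero] at hlast
    exact ha'0 hlast
  refine ⟨∑ i, a i, Ideal.sum_mem L (fun i _ => hg.1 i), ?_⟩
  intro x hx
  have key : ∀ m : ℕ, ∀ i : Fin n, (i : ℕ) = m → x * a i = 0 := by
    intro m
    induction m using Nat.strong_induction_on with
    | _ m IH =>
      intro i him
      have e1 : (∑ j, (x * a j) * a i) = 0 := by
        have : (∑ j, (x * a j) * a i) = (x * ∑ j, a j) * a i := by
          rw [Finset.mul_sum, Finset.sum_mul]
        rw [this, hx, zero_mul]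
      have e2 : ∀ j : Fin n, j ∈ Finset.univ → j ≠ i → (x * a j) * a i = 0 := by
        intro j _ hj
        rcases lt_or_gt_of_ne hj with h | h
        · have hjm : (j : ℕ) < m := him ▸ (Fin.lt_def.mp h)
          rw [IH j.val hjm j rfl, zero_mul]
        · rw [mul_assoc, hg.2.2.2 i j h, mul_zero]
      rw [Finset.sum_eq_single i e2 (fun h => absurd (Finset.mem_univ i) h)] at e1
      exact hg.2.2.1 i (x * a i) e1 ⟨x, rfl⟩
  have hJbot : (⨅ i, lann (a i)) = ⊥ := ess_inf_bot hess hKbot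
  have hxJ : x ∈ (⨅ i, lann (a i)) :=
    (Submodule.mem_iInf _).mpr (fun i => mem_lann.mpr (key i.val i rfl))
  rw [hJbot] at hxJ
  exact (Submodule.mem_bot R).mp hxJ

/-- left regularity propagates through `σ` -/
theorem leftreg_step (hsp : IsSemiprimeRing R) [IsNoetherianRing R]
    {L : Ideal R} (hess : IsEssentialLeftIdeal L)
    {σ : R →+* R} (hfix : ⇑σ '' (L : Set R) = (L : Set R)) (hinj : Function.Injective ⇑σ)
    {u : R} (hu : ∀ w : R, w * u = 0 → w = 0) :
    ∀ x : R, x * σ u = 0 → x = 0 := by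
  intro x hx
  apply ess_lann_zero hsp
  apply ess_mono (cond_essential hess x)
  intro y hy
  have hyL : y * x ∈ (L : Set R) := mem_condI.mp hy
  rw [← hfix] at hyL
  obtain ⟨w, hwL, hw⟩ := hyL
  have h1 : σ (w * u) = 0 := by rw [map_mul, hw, mul_assoc, hx, mul_zero]
  have h2 : w * u = 0 := hinj (by rw [h1, map_zero])
  have h3 : w = 0 := hu _ h2
  show y * x = 0
  rw [← hw, h3, map_zero]

/-- kernel of the k-th iterate of σ -/
def iterKer (σ : R →+* R) (k : ℕ) : Ideal R where
  carrier := {x | (⇑σ)^[k] x = 0}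
  add_mem' := by
    intro x y hx hy
    simp only [Set.mem_setOf_eq] at *
    rw [iterate_map_add, hx, hy, add_zero]
  zero_mem' := by
    simp only [Set.mem_setOf_eq]
    exact iterate_map_zero σ k
  smul_mem' := by
    intro r x hx
    simp only [smul_eq_mul, Set.mem_setOf_eq] at *
    rw [iterate_map_mul, hx, mul_zero]

theorem mem_iterKer {σ : R →+* R} {k : ℕ} {x : R} : x ∈ iterKer σ k ↔ (⇑σ)^[k] x = 0 :=
  Iff.rfl

/-- the k-th division ideal: z with σ^[k] z ∈ R · σ^[k] c -/
def divIdeal (σ : R →+* R) (c : R) (k : ℕ) : Ideal R where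
  carrier := {z | ∃ r : R, (⇑σ)^[k] z = r * (⇑σ)^[k] c}
  add_mem' := by
    rintro x y ⟨r, hr⟩ ⟨s, hs⟩
    exact ⟨r + s, by rw [iterate_map_add, hr, hs, add_mul]⟩
  zero_mem' := ⟨0, by rw [iterate_map_zero, zero_mul]⟩
  smul_mem' := by
    rintro t z ⟨r, hr⟩
    exact ⟨(⇑σ)^[k] t * r, by
      simp only [smul_eq_mul]
      rw [iterate_map_mul, hr, mul_assoc]⟩

theorem mem_divIdeal {σ : R →+* R} {c : R} {k : ℕ} {z : R} :
    z ∈ divIdeal σ c k ↔ ∃ r : R, (⇑σ)^[k] z = r * (⇑σ)^[k] c := Iff.rfl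

end CJ

/-- Every endomorphism of a semiprime left noetherian ring fixing (setwise)
an essential left ideal is an automorphism. -/


theorem stmt17 {R : Type u} [Ring R] (hsp : IsSemiprimeRing R) [IsNoetherianRing R]
    (L : Ideal R) (hess : IsEssentialLeftIdeal L) (σ : R →+* R)
    (hfix : ⇑σ '' (L : Set R) = (L : Set R)) :
    Function.Bijective σ := by
  classical
  have hitL : ∀ k : ℕ, (⇑σ)^[k] '' (L : Set R) = (L : Set R) := by
    intro k
    induction k with
    | zero => simp
    | succ k ih => rw [Function.iterate_succ, Set.image_comp, hfix, ih]
  -- injectivity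
  have hinj : Function.Injective ⇑σ := by
    rw [injective_iff_map_eq_zero]
    intro x hx
    by_contra hx0
    obtain ⟨N, hN⟩ := CJ.chain_stab (CJ.iterKer σ)
      (monotone_nat_of_le_succ (by
        intro k z hz
        rw [CJ.mem_iterKer] at *
        rw [Function.iterate_succ_apply', hz, map_zero]))
    have hsp1 : Ideal.span {x} ≠ ⊥ := by
      rw [Submodule.ne_bot_iff]
      exact ⟨x, Ideal.subset_span (Set.mem_singleton x), hx0⟩
    obtain ⟨w, hw, hw0⟩ := (Submodule.ne_bot_iff _).mp (hess _ hsp1)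
    obtain ⟨hwL, hwx⟩ := hw
    obtain ⟨s, hs⟩ := Submodule.mem_span_singleton.mp hwx
    have hσw : σ w = 0 := by
      rw [← hs, smul_eq_mul, map_mul, hx, mul_zero]
    have hwL' : w ∈ (⇑σ)^[N] '' (L : Set R) := by rw [hitL]; exact hwL
    obtain ⟨y, hyL, hy⟩ := hwL'
    have hyk : y ∈ CJ.iterKer σ (N + 1) := by
      rw [CJ.mem_iterKer, Function.iterate_succ_apply', hy, hσw]
    rw [← hN (N + 1) (by omega)] at hyk
    rw [CJ.mem_iterKer] at hyk
    rw [hy] at hyk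
    exact hw0 hyk
  refine ⟨hinj, ?_⟩
  -- a left-regular element of L
  obtain ⟨c, hcL, hcreg⟩ := CJ.exists_leftreg hsp L hess
  have hcsL : ∀ k : ℕ, (⇑σ)^[k] c ∈ L := by
    intro k
    have : (⇑σ)^[k] c ∈ (⇑σ)^[k] '' (L : Set R) := ⟨c, hcL, rfl⟩
    rw [hitL] at this
    exact this
  have hcsreg : ∀ k : ℕ, ∀ x : R, x * (⇑σ)^[k] c = 0 → x = 0 := by
    intro k
    induction k with
    | zero => exact hcreg
    | succ k ih =>
      intro x hx
      rw [Function.iterate_succ_apply'] at hx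
      exact CJ.leftreg_step hsp hess hfix hinj ih x hx
  -- surjectivity via the stabilizing chain of division ideals
  obtain ⟨n, hn⟩ := CJ.chain_stab (CJ.divIdeal σ c)
    (monotone_nat_of_le_succ (by
      rintro k z ⟨r, hr⟩
      exact ⟨σ r, by
        rw [Function.iterate_succ_apply', hr, map_mul,
          ← Function.iterate_succ_apply' (⇑σ) k c]⟩))
  intro t
  have hg : t * (⇑σ)^[n + 1] c ∈ (L : Set R) := by
    have := L.smul_mem t (hcsL (n + 1))
    simpa [smul_eq_mul] using this
  rw [← hitL (n + 1)] at hg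
  obtain ⟨z, hzL, hz⟩ := hg
  have hz1 : z ∈ CJ.divIdeal σ c (n + 1) := ⟨t, hz⟩
  rw [← hn (n + 1) (by omega)] at hz1
  obtain ⟨s, hs⟩ := CJ.mem_divIdeal.mp hz1
  have h2 : (⇑σ)^[n + 1] z = σ s * (⇑σ)^[n + 1] c := by
    rw [Function.iterate_succ_apply', hs, map_mul,
      ← Function.iterate_succ_apply' (⇑σ) n c]
  have h3 : (t - σ s) * (⇑σ)^[n + 1] c = 0 := by
    rw [sub_mul, ← hz, ← h2, sub_self]
  have h4 : t - σ s = 0 := hcsreg (n + 1) _ h3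
  exact ⟨s, by have := sub_eq_zero.mp h4; exact this.symm⟩
end

section
/- Let σ be an endomorphism of a prime left noetherian ring R such that σ(R) contains a nonzero two-sided ideal I of R. Then for every n ≥ 1 there exists a nonzero two-sided ideal I_n of R with I_n ⊆ σ^n(R) and I_{n+1} ⊆ σ(I_n); moreover there exists a nonzero ideal J of R such that σ^i(J) is a nonzero ideal of R for all 1 ≤ i ≤ n. -/
/-!
A prime left noetherian ring has no nonzero nil left ideals; together with the stabilisation
of the left annihilators of the powers of an element, a maximality argument produces a
left-regular element `c` in every nonzero two-sided ideal. As `Rc ⊆ I ⊆ σ(R)`, the map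
`L ↦ σ⁻¹(Lc)` on left ideals is strictly monotone, so iterating it from `0` would give a
strictly ascending chain if `ker σ ≠ 0`: hence `σ` is injective. The ideals `I₀ = I`,
`Iₙ₊₁ = ⟨I σ(Iₙ) I⟩` are then nonzero by primeness and lie in `σ(Iₙ)` because `I ⊆ σ(R)`.
For the second claim take `J = σ⁻ⁿ(Iₙ)`: by injectivity `σⁱ(J) = σ⁻⁽ⁿ⁻ⁱ⁾(Iₙ)`.
-/

universe u v

section Development

variable {R : Type u} [Ring R]

lemma mem_lAnnIdeal_singleton {a z : R} : z ∈ lAnnIdeal R {a} ↔ z * a = 0 :=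
  ⟨fun h => h a rfl, fun h _ hx => hx ▸ h⟩

namespace IsPrimeRingE

lemma isSemiprimeRing (hR : IsPrimeRingE R) : IsSemiprimeRing R :=
  fun a ha => (hR.2 a a ha).elim id id

lemma exists_mul_mul_ne_zero (hR : IsPrimeRingE R) {x y : R} (hx : x ≠ 0) (hy : y ≠ 0) :
    ∃ r : R, x * r * y ≠ 0 := by
  by_contra! h
  exact (hR.2 x y h).elim hx hy

lemma exists_mem_mul_left_ne_zero (hR : IsPrimeRingE R) {I : Ideal R} (hI2 : IsTwoSided I)
    (hI : I ≠ ⊥) {x : R} (hx : x ≠ 0) : ∃ a ∈ I, a * x ≠ 0 := by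
  obtain ⟨a, haI, ha⟩ := (Submodule.ne_bot_iff I).mp hI
  obtain ⟨r, hr⟩ := hR.exists_mul_mul_ne_zero ha hx
  exact ⟨a * r, hI2 a haI r, hr⟩

lemma exists_mem_mul_right_ne_zero (hR : IsPrimeRingE R) {I : Ideal R} (hI : I ≠ ⊥) {x : R}
    (hx : x ≠ 0) : ∃ b ∈ I, x * b ≠ 0 := by
  obtain ⟨b, hbI, hb⟩ := (Submodule.ne_bot_iff I).mp hI
  obtain ⟨r, hr⟩ := hR.exists_mul_mul_ne_zero hx hb
  exact ⟨r * b, I.mul_mem_left r hbI, by rwa [← mul_assoc]⟩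

end IsPrimeRingE

lemma IsNilpotent.exists_pow_ne_zero_mul_eq_zero {M : Type*} [MonoidWithZero M] {x : M}
    (hx : IsNilpotent x) (hx0 : x ≠ 0) : ∃ k : ℕ, x ^ (k + 1) ≠ 0 ∧ x * x ^ (k + 1) = 0 := by
  have : Nontrivial M := ⟨⟨x, 0, hx0⟩⟩
  have hpos : 0 < nilpotencyClass x := pos_nilpotencyClass_iff.mpr hx
  have hne1 : nilpotencyClass x ≠ 1 := fun h => hx0 (nilpotencyClass_eq_one.mp h)
  obtain ⟨k, hk⟩ : ∃ k, nilpotencyClass x = k + 1 + 1 := ⟨nilpotencyClass x - 2, by omega⟩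
  obtain ⟨hzero, hne⟩ := nilpotencyClass_eq_succ_iff.mp hk
  exact ⟨k, hne, by rw [← pow_succ']; exact hzero⟩

lemma isNilpotent_mul_comm {x y : R} (h : IsNilpotent (y * x)) : IsNilpotent (x * y) := by
  have hpow (m : ℕ) : (x * y) ^ (m + 1) = x * (y * x) ^ m * y := by
    induction m with
    | zero => simp
    | succ m ih => rw [pow_succ, ih, pow_succ]; noncomm_ring
  obtain ⟨m, hm⟩ := h
  exact ⟨m + 1, by rw [hpow, hm, mul_zero, zero_mul]⟩

lemma mul_mul_eq_zero_of_lAnnIdeal_maximal {a : R} (hnil : ∀ r, IsNilpotent (a * r))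
    (hmax : ∀ b : R, b ≠ 0 → (∀ r, IsNilpotent (b * r)) →
      ¬ lAnnIdeal R {a} < lAnnIdeal R {b}) (r : R) : a * r * a = 0 := by
  by_cases h : a * r = 0
  · rw [h, zero_mul]
  obtain ⟨k, hne, hzero⟩ := (hnil r).exists_pow_ne_zero_mul_eq_zero h
  have hb : (a * r) ^ (k + 1) = a * (r * (a * r) ^ k) := by rw [pow_succ', mul_assoc]
  have hle : lAnnIdeal R {a} ≤ lAnnIdeal R {(a * r) ^ (k + 1)} := fun z hz => by
    rw [mem_lAnnIdeal_singleton] at hz ⊢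
    rw [hb, ← mul_assoc, hz, zero_mul]
  have heq := eq_of_le_of_not_lt hle <| hmax _ hne fun s => by
    rw [hb, mul_assoc]; exact hnil _
  have har : a * r ∈ lAnnIdeal R {(a * r) ^ (k + 1)} := mem_lAnnIdeal_singleton.mpr hzero
  rwa [← heq, mem_lAnnIdeal_singleton] at har

theorem IsSemiprimeRing.eq_bot_of_forall_isNilpotent (hR : IsSemiprimeRing R)
    [IsNoetherianRing R] {W : Ideal R} (hW : ∀ x ∈ W, IsNilpotent x) : W = ⊥ := by
  by_contra hbot
  obtain ⟨x, hxW, hx⟩ := (Submodule.ne_bot_iff W).mp hbot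
  obtain ⟨_, ⟨a, ha, hanil, rfl⟩, hmax⟩ := set_has_maximal_iff_noetherian.mpr inferInstance
    {J : Ideal R | ∃ a : R, a ≠ 0 ∧ (∀ r, IsNilpotent (a * r)) ∧ J = lAnnIdeal R {a}}
    ⟨_, x, hx, fun r => isNilpotent_mul_comm (hW _ (W.mul_mem_left r hxW)), rfl⟩
  exact ha <| hR a <| mul_mul_eq_zero_of_lAnnIdeal_maximal hanil
    fun b hb hbnil => hmax _ ⟨b, hb, hbnil, rfl⟩

/-- `lAnn(d²) = lAnn(d)`. -/
def LAnnStable (d : R) : Prop := ∀ z : R, z * (d * d) = 0 → z * d = 0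

lemma exists_pow_ne_zero_lAnnStable [IsNoetherianRing R] {u : R} (hu : ¬ IsNilpotent u) :
    ∃ n : ℕ, u ^ (n + 1) ≠ 0 ∧ LAnnStable (u ^ (n + 1)) := by
  have mono : Monotone fun m : ℕ => lAnnIdeal R {u ^ m} := by
    refine monotone_nat_of_le_succ fun m z hz => ?_
    rw [mem_lAnnIdeal_singleton] at hz ⊢
    rw [pow_succ, ← mul_assoc, hz, zero_mul]
  obtain ⟨N, hN⟩ := monotone_stabilizes_iff_noetherian.mpr inferInstance ⟨_, mono⟩
  refine ⟨N, fun h => hu ⟨N + 1, h⟩, fun z hz => ?_⟩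
  have hmem : z ∈ lAnnIdeal R {u ^ (N + 1 + (N + 1))} := by
    rwa [mem_lAnnIdeal_singleton, pow_add]
  have hstable : lAnnIdeal R {u ^ (N + 1)} = lAnnIdeal R {u ^ (N + 1 + (N + 1))} :=
    (hN _ (by omega)).symm.trans (hN _ (by omega))
  rwa [← hstable, mem_lAnnIdeal_singleton] at hmem

lemma IsPrimeRingE.exists_ne_zero_lAnnStable_mem (hR : IsPrimeRingE R) [IsNoetherianRing R]
    {W : Ideal R} (hW : W ≠ ⊥) : ∃ d ∈ W, d ≠ 0 ∧ LAnnStable d := by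
  obtain ⟨u, huW, hu⟩ : ∃ u ∈ W, ¬ IsNilpotent u := by
    by_contra! h
    exact hW (hR.isSemiprimeRing.eq_bot_of_forall_isNilpotent h)
  obtain ⟨n, hne, hstable⟩ := exists_pow_ne_zero_lAnnStable hu
  exact ⟨u ^ (n + 1), by rw [pow_succ]; exact W.mul_mem_left _ huW, hne, hstable⟩

namespace LAnnStable

variable {c d : R}

lemma mul_eq_zero_of_mul_add_eq_zero (hc : LAnnStable c) (hdc : d * c = 0) {y : R}
    (hy : y * (c + d) = 0) : y * c = 0 ∧ y * d = 0 := by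
  have hyc : y * c = 0 := hc y <| calc
    y * (c * c) = y * (c + d) * c - y * (d * c) := by noncomm_ring
    _ = 0 := by rw [hy, hdc]; simp
  refine ⟨hyc, ?_⟩
  calc y * d = y * (c + d) - y * c := by noncomm_ring
    _ = 0 := by rw [hy, hyc, sub_zero]

lemma add (hc : LAnnStable c) (hd : LAnnStable d) (hdc : d * c = 0) : LAnnStable (c + d) := by
  intro y hy
  obtain ⟨hwc, hwd⟩ := hc.mul_eq_zero_of_mul_add_eq_zero hdc (y := y * (c + d)) (by
    rwa [mul_assoc])
  have hyc : y * c = 0 := hc y <| calc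
    y * (c * c) = y * (c + d) * c - y * (d * c) := by noncomm_ring
    _ = 0 := by rw [hwc, hdc]; simp
  have hyd : y * d = 0 := hd y <| calc
    y * (d * d) = y * (c + d) * d - y * c * d := by noncomm_ring
    _ = 0 := by rw [hwd, hyc]; simp
  rw [mul_add, hyc, hyd, add_zero]

lemma eq_zero_of_mem_sup_span_of_mul_add_eq_zero {S : Ideal R}
    (hS : ∀ w ∈ S, w * c = 0 → w = 0) (hc : LAnnStable c) (hd : LAnnStable d)
    (hdc : d * c = 0) : ∀ w ∈ S ⊔ Ideal.span {d}, w * (c + d) = 0 → w = 0 := by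
  intro w hw hwcd
  obtain ⟨s, hs, t, ht, rfl⟩ := Submodule.mem_sup.mp hw
  obtain ⟨r, rfl⟩ := Submodule.mem_span_singleton.mp ht
  obtain ⟨hwc, hwd⟩ := hc.mul_eq_zero_of_mul_add_eq_zero hdc hwcd
  have hs0 : s = 0 := hS s hs <| by
    rwa [add_mul, smul_eq_mul, mul_assoc, hdc, mul_zero, add_zero] at hwc
  have hrd : r * d = 0 := hd r <| by
    rwa [hs0, zero_add, smul_eq_mul, mul_assoc] at hwd
  rw [hs0, zero_add, smul_eq_mul, hrd]

end LAnnStable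

/-- The Goldie-type step: a left ideal `S` maximal with `S ∩ lAnn(c) = 0` for some
`lAnn`-stable `c ∈ I` forces `lAnn(c) = 0`, since otherwise `lAnn(c) ∩ I` supplies an
`lAnn`-stable `d` with `S + Rd` and `c + d` a larger such pair. -/
theorem IsPrimeRingE.exists_leftReg_mem (hR : IsPrimeRingE R) [IsNoetherianRing R]
    {I : Ideal R} (hI2 : IsTwoSided I) (hI : I ≠ ⊥) : ∃ c ∈ I, LeftReg c := by
  obtain ⟨S, ⟨c, hcI, hc, hS⟩, hmax⟩ := set_has_maximal_iff_noetherian.mpr inferInstance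
    {S : Ideal R | ∃ c ∈ I, LAnnStable c ∧ ∀ w ∈ S, w * c = 0 → w = 0}
    ⟨⊥, 0, I.zero_mem, fun z _ => mul_zero z, fun w hw _ => (Submodule.mem_bot R).mp hw⟩
  refine ⟨c, hcI, fun z hzc => by_contra fun hz => ?_⟩
  obtain ⟨a, haI, haz⟩ := hR.exists_mem_mul_left_ne_zero hI2 hI hz
  have hW : lAnnIdeal R {c} ⊓ I ≠ ⊥ := (Submodule.ne_bot_iff _).mpr
    ⟨a * z, ⟨mem_lAnnIdeal_singleton.mpr (by rw [mul_assoc, hzc, mul_zero]), hI2 a haI z⟩, haz⟩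
  obtain ⟨d, ⟨hdcAnn, hdI⟩, hd0, hd⟩ := hR.exists_ne_zero_lAnnStable_mem hW
  have hdc : d * c = 0 := mem_lAnnIdeal_singleton.mp hdcAnn
  have hdS : d ∉ S := fun hdS => hd0 (hS d hdS hdc)
  refine hmax (S ⊔ Ideal.span {d}) ⟨c + d, I.add_mem hcI hdI, hc.add hd hdc,
    LAnnStable.eq_zero_of_mem_sup_span_of_mul_add_eq_zero hS hc hd hdc⟩ ?_
  exact lt_of_le_of_ne le_sup_left fun h =>
    hdS (h ▸ Ideal.mem_sup_right (Ideal.subset_span rfl))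

section Injectivity

variable (σ : R →+* R) (c : R)

/-- `σ⁻¹(Lc)`. -/
def preimageMulRight (L : Ideal R) : Ideal R :=
  Ideal.comap σ (Submodule.map (LinearMap.toSpanSingleton R R c) L)

variable {σ c}

lemma mem_preimageMulRight {L : Ideal R} {w : R} :
    w ∈ preimageMulRight σ c L ↔ ∃ x ∈ L, x * c = σ w := Iff.rfl

lemma strictMono_preimageMulRight (hc : LeftReg c) (hcσ : ∀ x, x * c ∈ Set.range σ) :
    StrictMono (preimageMulRight σ c) := by
  have mono : Monotone (preimageMulRight σ c) :=
    fun L L' h => Ideal.comap_mono (Submodule.map_mono h)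
  refine fun L L' h => lt_of_le_of_ne (mono h.le) fun heq => h.not_ge fun x hx => ?_
  obtain ⟨w, hw⟩ := hcσ x
  obtain ⟨x', hx', hx'c⟩ := mem_preimageMulRight.mp
    (heq ▸ mem_preimageMulRight.mpr ⟨x, hx, hw.symm⟩ : w ∈ preimageMulRight σ c L)
  have hxx' : x' - x = 0 := hc _ (by rw [sub_mul, hx'c, hw, sub_self])
  rwa [← sub_eq_zero.mp hxx']

/-- If `σ k = 0` with `k ≠ 0`, iterating `L ↦ σ⁻¹(Lc)` from `0` gives a strictly ascending
chain of left ideals. -/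
theorem injective_of_leftReg_mul_mem_range [IsNoetherianRing R] (hc : LeftReg c)
    (hcσ : ∀ x, x * c ∈ Set.range σ) : Function.Injective σ := by
  refine (injective_iff_map_eq_zero σ).mpr fun k hk => by_contra fun hk0 => ?_
  have hbot : ⊥ < preimageMulRight σ c ⊥ := bot_lt_iff_ne_bot.mpr <|
    (Submodule.ne_bot_iff _).mpr ⟨k, mem_preimageMulRight.mpr ⟨0, zero_mem _, by simp [hk]⟩, hk0⟩
  exact not_strictMono_of_wellFoundedGT _
    ((strictMono_preimageMulRight hc hcσ).strictMono_iterate_of_lt_map hbot)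

theorem IsPrimeRingE.injective_of_isTwoSided_subset_range (hR : IsPrimeRingE R)
    [IsNoetherianRing R] {I : Ideal R} (hI2 : IsTwoSided I) (hI : I ≠ ⊥)
    (hIσ : (I : Set R) ⊆ Set.range σ) : Function.Injective σ := by
  obtain ⟨c, hcI, hc⟩ := hR.exists_leftReg_mem hI2 hI
  exact injective_of_leftReg_mul_mem_range hc fun x => hIσ (I.mul_mem_left x hcI)

end Injectivity

lemma isTwoSided_span_of_mul_mem {S : Set R} (hS : ∀ s ∈ S, ∀ t, s * t ∈ S) :
    IsTwoSided (Ideal.span S) := by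
  intro y hy t
  induction hy using Submodule.span_induction with
  | mem s hs => exact Ideal.subset_span (hS s hs t)
  | zero => rw [zero_mul]; exact zero_mem _
  | add x y _ _ hx hy => rw [add_mul]; exact add_mem hx hy
  | smul r x _ hx => rw [smul_eq_mul, mul_assoc]; exact Ideal.mul_mem_left _ r hx

lemma coe_span_subset_of_mul_mem {S : Set R} {T : AddSubmonoid R}
    (hST : ∀ r, ∀ s ∈ S, r * s ∈ T) : (Ideal.span S : Set R) ⊆ T := by
  suffices ∀ y ∈ Ideal.span S, ∀ r, r * y ∈ T from fun y hy => by simpa using this y hy 1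
  intro y hy
  induction hy using Submodule.span_induction with
  | mem s hs => exact fun r => hST r s hs
  | zero => simp [zero_mem]
  | add x y _ _ hx hy => exact fun r => by rw [mul_add]; exact add_mem (hx r) (hy r)
  | smul a x _ hx => exact fun r => by rw [smul_eq_mul, ← mul_assoc]; exact hx _

lemma isTwoSided_comap (f : R →+* R) {B : Ideal R} (hB : IsTwoSided B) :
    IsTwoSided (Ideal.comap f B) := fun x hx r => by
  rw [Ideal.mem_comap, map_mul]
  exact hB _ hx _

section Tower

variable (σ : R →+* R) (I : Ideal R)

def sandwichIdeal (B : Ideal R) : Ideal R :=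
  Ideal.span {y | ∃ a ∈ I, ∃ x ∈ B, ∃ b ∈ I, a * σ x * b = y}

def sandwichTower : ℕ → Ideal R
  | 0 => I
  | n + 1 => sandwichIdeal σ I (sandwichTower n)

variable {σ I}

lemma isTwoSided_sandwichIdeal (hI2 : IsTwoSided I) (B : Ideal R) :
    IsTwoSided (sandwichIdeal σ I B) :=
  isTwoSided_span_of_mul_mem fun _ ⟨a, ha, x, hx, b, hb, hy⟩ t =>
    ⟨a, ha, x, hx, b * t, hI2 b hb t, by rw [← hy, mul_assoc _ b t]⟩

lemma sandwichIdeal_subset_image (hIσ : (I : Set R) ⊆ Set.range σ) {B : Ideal R}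
    (hB : IsTwoSided B) : (sandwichIdeal σ I B : Set R) ⊆ σ '' B := by
  refine (coe_span_subset_of_mul_mem (T := B.toAddSubmonoid.map σ) ?_).trans
    (AddSubmonoid.coe_map σ B.toAddSubmonoid).subset
  refine fun r _ ⟨a, ha, x, hx, b, hb, hy⟩ => ?_
  obtain ⟨a', ha'⟩ := hIσ (I.mul_mem_left r ha)
  obtain ⟨b', rfl⟩ := hIσ hb
  refine ⟨a' * x * b', hB _ (B.mul_mem_left a' hx) b', ?_⟩
  rw [← hy, ← mul_assoc, ← mul_assoc, ← ha']
  simp [map_mul]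

lemma sandwichIdeal_ne_bot (hR : IsPrimeRingE R) (hσ : Function.Injective σ)
    (hI2 : IsTwoSided I) (hI : I ≠ ⊥) {B : Ideal R} (hB : B ≠ ⊥) : sandwichIdeal σ I B ≠ ⊥ := by
  obtain ⟨x, hxB, hx⟩ := (Submodule.ne_bot_iff B).mp hB
  obtain ⟨b, hbI, hb⟩ := hR.exists_mem_mul_right_ne_zero hI ((map_ne_zero_iff σ hσ).mpr hx)
  obtain ⟨a, haI, ha⟩ := hR.exists_mem_mul_left_ne_zero hI2 hI hb
  exact (Submodule.ne_bot_iff _).mpr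
    ⟨_, Ideal.subset_span ⟨a, haI, x, hxB, b, hbI, rfl⟩, by rwa [mul_assoc]⟩

lemma isTwoSided_sandwichTower (hI2 : IsTwoSided I) : ∀ n, IsTwoSided (sandwichTower σ I n)
  | 0 => hI2
  | _ + 1 => isTwoSided_sandwichIdeal hI2 _

lemma sandwichTower_ne_bot (hR : IsPrimeRingE R) (hσ : Function.Injective σ)
    (hI2 : IsTwoSided I) (hI : I ≠ ⊥) : ∀ n, sandwichTower σ I n ≠ ⊥
  | 0 => hI
  | n + 1 => sandwichIdeal_ne_bot hR hσ hI2 hI (sandwichTower_ne_bot hR hσ hI2 hI n)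

lemma sandwichTower_succ_subset_image (hIσ : (I : Set R) ⊆ Set.range σ) (hI2 : IsTwoSided I)
    (n : ℕ) : (sandwichTower σ I (n + 1) : Set R) ⊆ σ '' sandwichTower σ I n :=
  sandwichIdeal_subset_image hIσ (isTwoSided_sandwichTower hI2 n)

lemma sandwichTower_subset_range (hIσ : (I : Set R) ⊆ Set.range σ) (hI2 : IsTwoSided I) :
    ∀ n, (sandwichTower σ I n : Set R) ⊆ Set.range (⇑σ)^[n]
  | 0 => fun x _ => ⟨x, rfl⟩
  | n + 1 => fun _ hy => by
    obtain ⟨x, hx, rfl⟩ := sandwichTower_succ_subset_image hIσ hI2 n hy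
    obtain ⟨w, rfl⟩ := sandwichTower_subset_range hIσ hI2 n hx
    exact ⟨w, Function.iterate_succ_apply' σ n w⟩

end Tower

section Iterate

variable {σ : R →+* R} {B : Ideal R} {m i : ℕ}

lemma comap_pow_ne_bot (hB : B ≠ ⊥) (hBσ : (B : Set R) ⊆ Set.range (⇑σ)^[m + i]) :
    Ideal.comap (σ ^ m) B ≠ ⊥ := by
  obtain ⟨y, hyB, hy⟩ := (Submodule.ne_bot_iff B).mp hB
  obtain ⟨w, rfl⟩ := hBσ hyB
  rw [Function.iterate_add_apply] at hyB hy
  refine (Submodule.ne_bot_iff _).mpr ⟨(⇑σ)^[i] w, ?_, fun h => hy (by rw [h, iterate_map_zero])⟩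
  rwa [Ideal.mem_comap, RingHom.coe_pow]

lemma image_iterate_comap_pow (hσ : Function.Injective σ)
    (hBσ : (B : Set R) ⊆ Set.range (⇑σ)^[m + i]) :
    (⇑σ)^[i] '' (Ideal.comap (σ ^ (m + i)) B : Set R) = Ideal.comap (σ ^ m) B := by
  simp only [Ideal.coe_comap, RingHom.coe_pow, Function.iterate_add, Set.preimage_comp]
  refine Set.image_preimage_eq_of_subset fun x hx => ?_
  obtain ⟨w, hw⟩ := hBσ hx
  rw [Function.iterate_add_apply] at hw
  exact ⟨w, hσ.iterate m hw⟩

end Iterate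

end Development

/-- If `σ` is an endomorphism of a prime left noetherian ring whose image
contains a nonzero two-sided ideal `I`, then there is a sequence of nonzero
two-sided ideals `Jₙ ⊆ σⁿ(R)` with `J_{n+1} ⊆ σ(Jₙ)`; moreover for every
`n ≥ 1` there is a nonzero ideal `J` with `σⁱ(J)` a nonzero ideal for all
`1 ≤ i ≤ n`. -/
theorem stmt18 {R : Type u} [Ring R] (hprime : IsPrimeRingE R) [IsNoetherianRing R]
    (σ : R →+* R) (I : Ideal R) (hI2 : IsTwoSided I) (hI : I ≠ ⊥)
    (hIr : (I : Set R) ⊆ Set.range σ) :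
    (∃ J : ℕ → Ideal R, ∀ n : ℕ, 1 ≤ n →
      IsTwoSided (J n) ∧ J n ≠ ⊥ ∧ ((J n : Set R) ⊆ Set.range (⇑σ)^[n]) ∧
        ((J (n + 1) : Set R) ⊆ ⇑σ '' (J n : Set R))) ∧
    (∀ n : ℕ, 1 ≤ n → ∃ J : Ideal R, IsTwoSided J ∧ J ≠ ⊥ ∧
      ∀ i : ℕ, 1 ≤ i → i ≤ n → ∃ K : Ideal R, IsTwoSided K ∧ K ≠ ⊥ ∧
        (K : Set R) = (⇑σ)^[i] '' (J : Set R)) := by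
  have hσ := hprime.injective_of_isTwoSided_subset_range hI2 hI hIr
  have htwo := isTwoSided_sandwichTower (σ := σ) hI2
  have hne := sandwichTower_ne_bot hprime hσ hI2 hI
  have hrange := sandwichTower_subset_range hIr hI2
  refine ⟨⟨sandwichTower σ I, fun n _ =>
    ⟨htwo n, hne n, hrange n, sandwichTower_succ_subset_image hIr hI2 n⟩⟩, fun n _ => ?_⟩
  refine ⟨Ideal.comap (σ ^ n) (sandwichTower σ I n), isTwoSided_comap _ (htwo n),
    comap_pow_ne_bot (i := 0) (hne n) (hrange n), fun i _ hin => ?_⟩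
  obtain ⟨m, rfl⟩ : ∃ m, n = m + i := ⟨n - i, by omega⟩
  exact ⟨_, isTwoSided_comap _ (htwo _), comap_pow_ne_bot (hne _) (hrange _),
    (image_iterate_comap_pow hσ (hrange _)).symm⟩
end

section
/- Let R be a left principal ideal domain and σ an endomorphism of R such that σ(R) contains a nonzero left ideal L of R. Then σ is an automorphism of R. -/
universe u v

/-- Every endomorphism of a left principal ideal domain whose image contains
a nonzero left ideal is an automorphism. -/
theorem stmt19 {R : Type u} [Ring R] [IsDomain R]
    (hpid : ∀ I : Ideal R, I.IsPrincipal) (σ : R →+* R)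
    (L : Ideal R) (hL : L ≠ ⊥) (hLr : (L : Set R) ⊆ Set.range σ) :
    Function.Bijective σ := by
  classical
  obtain ⟨c, hc⟩ := (hpid (L.comap σ)).principal
  have hcJ : c ∈ L.comap σ := by rw [hc]; exact Submodule.mem_span_singleton_self c
  have hσc : σ c ∈ L := hcJ
  -- σ c ≠ 0
  have hσc0 : σ c ≠ 0 := by
    intro h0
    apply hL
    rw [eq_bot_iff]
    intro x hx
    obtain ⟨u, hu⟩ := hLr hx
    have huJ : u ∈ L.comap σ := by simpa [Ideal.mem_comap, hu] using hx
    rw [hc] at huJ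
    obtain ⟨r, hr⟩ := Submodule.mem_span_singleton.mp huJ
    have : x = σ r * σ c := by
      rw [← map_mul, ← smul_eq_mul, hr, hu]
    simp [this, h0]
  -- surjectivity
  have hsurj : Function.Surjective σ := by
    intro a
    have h1 : a * σ c ∈ L := by
      simpa [smul_eq_mul] using L.smul_mem a hσc
    obtain ⟨w, hw⟩ := hLr h1
    have hwJ : w ∈ L.comap σ := by simpa [Ideal.mem_comap, hw] using h1
    rw [hc] at hwJ
    obtain ⟨r, hr⟩ := Submodule.mem_span_singleton.mp hwJ
    refine ⟨r, ?_⟩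
    have h2 : σ r * σ c = a * σ c := by
      rw [← map_mul, ← smul_eq_mul, hr, hw]
    have h3 : (σ r - a) * σ c = 0 := by rw [sub_mul, h2, sub_self]
    rcases mul_eq_zero.mp h3 with h4 | h4
    · exact sub_eq_zero.mp h4
    · exact absurd h4 hσc0
  -- kernels of powers
  set K : ℕ → Ideal R := fun n => RingHom.ker (σ ^ n) with hK
  have happ : ∀ n x, (σ ^ (n + 1)) x = σ ((σ ^ n) x) := by
    intro n x
    rw [pow_succ']
    rfl
  have happ2 : ∀ n x, (σ ^ (n + 1)) x = (σ ^ n) (σ x) := by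
    intro n x
    rw [pow_succ]
    rfl
  have hKmono : Monotone K := by
    apply monotone_nat_of_le_succ
    intro n x hx
    have hx' : (σ ^ n) x = 0 := hx
    show (σ ^ (n + 1)) x = 0
    rw [happ, hx', map_zero]
  obtain ⟨u, hu⟩ := (hpid (⨆ n, K n)).principal
  have humem : u ∈ ⨆ n, K n := by
    rw [hu]; exact Submodule.mem_span_singleton_self u
  obtain ⟨N, hNmem⟩ := (Submodule.mem_iSup_of_directed _ hKmono.directed_le).mp humem
  have hstab : K (N + 1) ≤ K N := by
    intro x hx
    have hx2 : x ∈ ⨆ n, K n := Submodule.mem_iSup_of_mem (N + 1) hx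
    rw [hu] at hx2
    obtain ⟨r, hr⟩ := Submodule.mem_span_singleton.mp hx2
    rw [← hr]
    exact (K N).smul_mem r hNmem
  -- surjectivity of powers
  have hpow : ∀ n, Function.Surjective (σ ^ n : R →+* R) := by
    intro n
    induction n with
    | zero => intro a; exact ⟨a, rfl⟩
    | succ n ih =>
        intro a
        obtain ⟨b, hb⟩ := ih a
        obtain ⟨b', hb'⟩ := hsurj b
        exact ⟨b', by rw [happ2, hb', hb]⟩
  refine ⟨?_, hsurj⟩
  rw [injective_iff_map_eq_zero σ]
  intro a ha
  obtain ⟨b, hb⟩ := hpow N a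
  have hb1 : b ∈ K (N + 1) := by
    show (σ ^ (N + 1)) b = 0
    rw [happ, hb, ha]
  have hb2 : (σ ^ N) b = 0 := hstab hb1
  rw [← hb, hb2]
end
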